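/- Let H be a real symmetric invertible d×d matrix with exactly one negative eigenvalue, and let v be a unit vector with v·H⁻¹v = -1/μ for some μ > 0. Then the matrix H + 2μ v⊗v is symmetric positive definite and det(H + 2μ v⊗v) = -det H. -/

import Mathlib

/-!
Put `w = H⁻¹ v` and `s = v ⬝ᵥ w = wᵀ H w = -1/μ < 0`. All eigenvalues of `H` but one are
positive, so the form `xᵀ H x` is positive definite on the hyperplane orthogonal to the remaining
eigenvector. A symmetric form that is positive on a hyperplane and negative at `w` is positive on
the `H`-orthogonal complement of `w`, which is `v⊥`. Splitting `x = y + t w` with `y ∈ v⊥` gives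
`xᵀ (H + c v vᵀ) x = yᵀ H y + t² s (1 + c s)`, which is positive for `c = 2μ`. The determinant is
the matrix determinant lemma: `det H * (1 + 2μ vᵀ H⁻¹ v) = -det H`.
-/

open Matrix

namespace Matrix

theorem det_add_vecMulVec {m α : Type*} [Fintype m] [DecidableEq m] [CommRing α]
    {A : Matrix m m α} (hA : IsUnit A.det) (u v : m → α) :
    (A + vecMulVec u v).det = A.det * (1 + v ⬝ᵥ A⁻¹ *ᵥ u) := by
  have hfactor : A + vecMulVec u v =
      A * (1 + replicateCol Unit (A⁻¹ *ᵥ u) * replicateRow Unit v) := by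
    rw [Matrix.mul_add, Matrix.mul_one, ← Matrix.mul_assoc, ← replicateCol_mulVec,
      mulVec_mulVec, mul_nonsing_inv A hA, one_mulVec, vecMulVec_eq Unit]
  rw [hfactor, det_mul, det_one_add_replicateCol_mul_replicateRow]

variable {n : Type*} [Fintype n]

theorem IsSymm.dotProduct_mulVec_comm {A : Matrix n n ℝ} (hA : A.IsSymm) (x y : n → ℝ) :
    x ⬝ᵥ A *ᵥ y = y ⬝ᵥ A *ᵥ x := by
  rw [dotProduct_mulVec, ← mulVec_transpose, hA.eq, dotProduct_comm]

theorem IsSymm.smul_add_smul_dotProduct_mulVec_self {A : Matrix n n ℝ} (hA : A.IsSymm)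
    (a b : ℝ) (x y : n → ℝ) :
    (a • x + b • y) ⬝ᵥ A *ᵥ (a • x + b • y) =
      a ^ 2 * (x ⬝ᵥ A *ᵥ x) + 2 * a * b * (x ⬝ᵥ A *ᵥ y) + b ^ 2 * (y ⬝ᵥ A *ᵥ y) := by
  simp only [add_dotProduct, smul_dotProduct, mulVec_add, mulVec_smul, dotProduct_add,
    dotProduct_smul, smul_eq_mul, hA.dotProduct_mulVec_comm y x]
  ring

theorem dotProduct_vecMulVec_self_mulVec (v x : n → ℝ) :
    x ⬝ᵥ vecMulVec v v *ᵥ x = (v ⬝ᵥ x) ^ 2 := by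
  rw [vecMulVec_mulVec, op_smul_eq_smul, dotProduct_smul, dotProduct_comm, smul_eq_mul, sq]

theorem IsSymm.dotProduct_mulVec_self_pos_of_orthogonal {A : Matrix n n ℝ} (hA : A.IsSymm)
    {ℓ w : n → ℝ} (hpos : ∀ z ≠ 0, ℓ ⬝ᵥ z = 0 → 0 < z ⬝ᵥ A *ᵥ z)
    (hw : w ⬝ᵥ A *ᵥ w < 0) {y : n → ℝ} (hy : y ≠ 0) (hwy : w ⬝ᵥ A *ᵥ y = 0) :
    0 < y ⬝ᵥ A *ᵥ y := by
  by_cases hℓy : ℓ ⬝ᵥ y = 0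
  · exact hpos y hy hℓy
  set z := (ℓ ⬝ᵥ y) • w + (-(ℓ ⬝ᵥ w)) • y with hz
  have hℓz : ℓ ⬝ᵥ z = 0 := by
    simp only [hz, dotProduct_add, dotProduct_smul, smul_eq_mul]
    ring
  have hQz : 0 ≤ z ⬝ᵥ A *ᵥ z := by
    rcases eq_or_ne z 0 with h | h
    · simp [h]
    · exact (hpos z h hℓz).le
  rw [hz, hA.smul_add_smul_dotProduct_mulVec_self, hwy] at hQz
  have hwterm : (ℓ ⬝ᵥ y) ^ 2 * (w ⬝ᵥ A *ᵥ w) < 0 := mul_neg_of_pos_of_neg (by positivity) hw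
  refine pos_of_mul_pos_right (a := (-(ℓ ⬝ᵥ w)) ^ 2) ?_ (sq_nonneg _)
  linarith

theorem posDef_add_smul_vecMulVec {A : Matrix n n ℝ} (hA : A.IsHermitian) {v w : n → ℝ}
    (hAw : A *ᵥ w = v) {c : ℝ} (hvw : v ⬝ᵥ w < 0) (hc : 1 + c * (v ⬝ᵥ w) < 0)
    (hpos : ∀ y ≠ 0, v ⬝ᵥ y = 0 → 0 < y ⬝ᵥ A *ᵥ y) :
    (A + c • vecMulVec v v).PosDef := by
  have hsymm : A.IsSymm := isHermitian_iff_isSymm.mp hA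
  have hherm : (A + c • vecMulVec v v).IsHermitian := by
    simp [isHermitian_iff_isSymm, IsSymm, transpose_add, hsymm.eq]
  refine .of_dotProduct_mulVec_pos hherm fun x hx => ?_
  set s := v ⬝ᵥ w
  set t := (v ⬝ᵥ x) / s
  set y := x - t • w with hy
  have hs0 : s ≠ 0 := hvw.ne
  have hvy : v ⬝ᵥ y = 0 := by
    simp only [hy, dotProduct_sub, dotProduct_smul, smul_eq_mul, t]
    field_simp
    ring
  have hx_eq : x = (1 : ℝ) • y + t • w := by simp [hy]
  have hQx : x ⬝ᵥ A *ᵥ x = y ⬝ᵥ A *ᵥ y + t ^ 2 * s := by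
    rw [hx_eq, hsymm.smul_add_smul_dotProduct_mulVec_self, hAw, dotProduct_comm y v, hvy,
      dotProduct_comm w v]
    ring
  have hvx : v ⬝ᵥ x = t * s := by
    simp only [t]
    field_simp
  have hform : star x ⬝ᵥ (A + c • vecMulVec v v) *ᵥ x =
      y ⬝ᵥ A *ᵥ y + t ^ 2 * (s * (1 + c * s)) := by
    rw [star_trivial, add_mulVec, dotProduct_add, smul_mulVec, dotProduct_smul,
      dotProduct_vecMulVec_self_mulVec, hQx, hvx, smul_eq_mul]
    ring
  have hs : 0 < s * (1 + c * s) := mul_pos_of_neg_of_neg hvw hc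
  rw [hform]
  rcases eq_or_ne y 0 with h0 | hy0
  · have ht : t ≠ 0 := by
      rintro ht
      apply hx
      rw [hx_eq, h0, ht]
      simp
    rw [h0, zero_dotProduct, zero_add]
    positivity
  · have := hpos y hy0 hvy
    positivity

section Spectral

variable [DecidableEq n]

theorem IsHermitian.star_eigenvectorUnitary_mulVec_apply {𝕜 : Type*} [RCLike 𝕜]
    {A : Matrix n n 𝕜} (hA : A.IsHermitian) (x : n → 𝕜) (i : n) :
    (star (hA.eigenvectorUnitary : Matrix n n 𝕜) *ᵥ x) i =
      star ⇑(hA.eigenvectorBasis i) ⬝ᵥ x := by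
  simp [mulVec, dotProduct, star_apply]

theorem IsHermitian.dotProduct_mulVec_self_eq_sum {A : Matrix n n ℝ} (hA : A.IsHermitian)
    (x : n → ℝ) :
    x ⬝ᵥ A *ᵥ x = ∑ i, hA.eigenvalues i * (⇑(hA.eigenvectorBasis i) ⬝ᵥ x) ^ 2 := by
  set U : Matrix n n ℝ := ↑hA.eigenvectorUnitary
  have hU : x ᵥ* U = star U *ᵥ x := by
    rw [star_eq_conjTranspose, conjTranspose_eq_transpose_of_trivial, mulVec_transpose]
  conv_lhs => rw [hA.spectral_theorem, Unitary.conjStarAlgAut_apply]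
  rw [← mulVec_mulVec, ← mulVec_mulVec, dotProduct_mulVec, hU, dotProduct, Finset.sum_congr rfl]
  intro i _
  rw [mulVec_diagonal, hA.star_eigenvectorUnitary_mulVec_apply, star_trivial]
  simp only [Function.comp_apply, RCLike.ofReal_real_eq_id, id]
  ring

theorem IsHermitian.dotProduct_mulVec_self_pos_of_orthogonal_eigenvector {A : Matrix n n ℝ}
    (hA : A.IsHermitian) {i₀ : n} (hev : ∀ i ≠ i₀, 0 < hA.eigenvalues i) {x : n → ℝ}
    (hx : x ≠ 0) (hxi : ⇑(hA.eigenvectorBasis i₀) ⬝ᵥ x = 0) : 0 < x ⬝ᵥ A *ᵥ x := by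
  set U : Matrix n n ℝ := ↑hA.eigenvectorUnitary
  obtain ⟨j, hj⟩ : ∃ j, ⇑(hA.eigenvectorBasis j) ⬝ᵥ x ≠ 0 := by
    by_contra! h
    have hcoord : star U *ᵥ x = 0 := by
      ext i
      rw [hA.star_eigenvectorUnitary_mulVec_apply, star_trivial, h, Pi.zero_apply]
    apply hx
    rw [← one_mulVec x, ← mem_unitaryGroup_iff.mp hA.eigenvectorUnitary.2, ← mulVec_mulVec,
      hcoord, mulVec_zero]
  have hji : j ≠ i₀ := by
    rintro rfl
    exact hj hxi
  rw [hA.dotProduct_mulVec_self_eq_sum]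
  refine Finset.sum_pos' (fun i _ => ?_) ⟨j, Finset.mem_univ j, by have := hev j hji; positivity⟩
  rcases eq_or_ne i i₀ with rfl | hi
  · simp [hxi]
  · have := hev i hi
    positivity

theorem IsHermitian.exists_forall_ne_eigenvalues_pos {A : Matrix n n ℝ} (hA : A.IsHermitian)
    (hdet : IsUnit A.det)
    (hneg : (Finset.univ.filter (fun i => hA.eigenvalues i < 0)).card = 1) :
    ∃ i₀, ∀ i ≠ i₀, 0 < hA.eigenvalues i := by
  obtain ⟨i₀, hi₀⟩ := Finset.card_eq_one.mp hneg
  refine ⟨i₀, fun i hi => lt_of_le_of_ne (not_lt.mp fun hlt => hi ?_) fun h0 => ?_⟩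
  · have hmem : i ∈ Finset.univ.filter (fun i => hA.eigenvalues i < 0) := by simpa using hlt
    simpa [hi₀] using hmem
  · apply hdet.ne_zero
    rw [hA.det_eq_prod_eigenvalues]
    exact Finset.prod_eq_zero (Finset.mem_univ i) (by simp [← h0])

end Spectral

end Matrix

theorem stmt_11_general (d : ℕ) (H : Matrix (Fin d) (Fin d) ℝ)
    (hH : H.IsHermitian) (hHinv : IsUnit H.det)
    (hHneg : (Finset.univ.filter (fun i => hH.eigenvalues i < 0)).card = 1)
    (μ : ℝ) (hμ : 0 < μ)
    (v : Fin d → ℝ)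
    (hvH : v ⬝ᵥ H⁻¹.mulVec v = -1 / μ) :
    (H + (2 * μ) • vecMulVec v v).PosDef ∧
    (H + (2 * μ) • vecMulVec v v).det = -H.det := by
  obtain ⟨i₀, hev⟩ := hH.exists_forall_ne_eigenvalues_pos hHinv hHneg
  have hsymm : H.IsSymm := isHermitian_iff_isSymm.mp hH
  set w := H⁻¹ *ᵥ v
  have hHw : H *ᵥ w = v := by rw [mulVec_mulVec, mul_nonsing_inv H hHinv, one_mulVec]
  have hvw : v ⬝ᵥ w < 0 := by
    rw [hvH]
    exact div_neg_of_neg_of_pos (by norm_num) hμ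
  have hpos : ∀ y ≠ 0, v ⬝ᵥ y = 0 → 0 < y ⬝ᵥ H *ᵥ y := fun y hy hvy =>
    hsymm.dotProduct_mulVec_self_pos_of_orthogonal
      (fun _ hz hzi => hH.dotProduct_mulVec_self_pos_of_orthogonal_eigenvector hev hz hzi)
      (by rwa [hHw, dotProduct_comm]) hy
      (by rw [hsymm.dotProduct_mulVec_comm, hHw, dotProduct_comm, hvy])
  refine ⟨posDef_add_smul_vecMulVec hH hHw hvw ?_ hpos, ?_⟩
  · rw [hvH]
    field_simp
    norm_num
  · rw [← smul_vecMulVec, det_add_vecMulVec hHinv, mulVec_smul, dotProduct_smul, hvH,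
      smul_eq_mul]
    field_simp
    ring

theorem stmt_11 (d : ℕ) (H : Matrix (Fin d) (Fin d) ℝ)
    (hH : H.IsHermitian) (hHinv : IsUnit H.det)
    (hHneg : (Finset.univ.filter (fun i => hH.eigenvalues i < 0)).card = 1)
    (μ : ℝ) (hμ : 0 < μ)
    (v : Fin d → ℝ) (hv : v ⬝ᵥ v = 1)
    (hvH : v ⬝ᵥ H⁻¹.mulVec v = -1 / μ) :
    (H + (2 * μ) • vecMulVec v v).PosDef ∧
    (H + (2 * μ) • vecMulVec v v).det = -H.det :=
  stmt_11_general d H hH hHinv hHneg μ hμ v hvH
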